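/- arXiv:1506.00753 — 2 statements merged into one kernel-verified Lean document; each statement's English description precedes it below -/
import Mathlib

section
/- For every fixed integer k ≥ 3, lim_{M→∞} [(M!)^{2k−k²}]^{1/M} · (Z_{k,M})^{1/M} = (k−1)^{k(k−1)} / k^{k(k−2)}. -/
/-!
Write `w(a) = (M - a)! / a!`, so that `w(a) = (M - a)(a + 1) w(a + 1)`. As `(M - a)(a + 1)` is a
concave quadratic symmetric about `(M - 1)/2`, moving one unit from a part `p` to a part
`q ≤ p - 2` of a composition of `M` (so `p + q ≤ M`) does not decrease `w(p) w(q)`; balancing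
the row this way shows that every row with sum `M` has weight at most `w(⌊M/k⌋)^k`. Conversely,
a circulant matrix with entries `⌊M/k⌋` and `⌊M/k⌋ + 1` has weight at least
`w(⌊M/k⌋)^{k²} / (M + 1)^{2k²}`, and there are at most `(M + 1)^{k²}` matrices. So `Z_{k,M}` is
`w(⌊M/k⌋)^{k²}` up to polynomial factors, which disappear under `(·)^{1/M}`, and the bounds
`log n! = n log n - n + O(log n)` give the limit of `(1/M) log ((M!)^{2k-k²} w(⌊M/k⌋)^{k²})`.
-/

open Real Filter Finset Topology
open scoped Nat

noncomputable def entryWeight (M a : ℕ) : ℝ := ((M - a)! : ℝ) / (a ! : ℝ)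

section entryWeight

variable {M : ℕ}

theorem entryWeight_pos (M a : ℕ) : 0 < entryWeight M a := by
  unfold entryWeight; positivity

theorem entryWeight_antitone (M : ℕ) : Antitone (entryWeight M) := by
  refine antitone_nat_of_succ_le fun a => ?_
  unfold entryWeight
  apply div_le_div₀ (by positivity) _ (by positivity) _ <;> norm_cast
  · exact Nat.factorial_le (by omega)
  · exact Nat.factorial_le (by omega)

theorem entryWeight_succ_mul {a : ℕ} (ha : a < M) :
    entryWeight M (a + 1) * ((M - a : ℕ) * (a + 1 : ℕ)) = entryWeight M a := by
  obtain ⟨n, hn⟩ : ∃ n, M - a = n + 1 := ⟨M - a - 1, by omega⟩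
  have hM : M - (a + 1) = n := by omega
  unfold entryWeight
  rw [hM, hn, Nat.factorial_succ n, Nat.factorial_succ a]
  push_cast
  field_simp

theorem entryWeight_le_mul_succ {a : ℕ} (ha : a < M) :
    entryWeight M a ≤ ((M : ℝ) + 1) ^ 2 * entryWeight M (a + 1) := by
  rw [← entryWeight_succ_mul ha, mul_comm]
  gcongr
  · exact (entryWeight_pos M _).le
  · have hMa : ((M - a : ℕ) : ℝ) ≤ M + 1 := by exact_mod_cast (by omega : M - a ≤ M + 1)
    have ha1 : ((a + 1 : ℕ) : ℝ) ≤ M + 1 := by exact_mod_cast Nat.succ_le_succ ha.le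
    rw [sq]
    gcongr

theorem entryWeight_mul_le_mul_of_exchange {p q : ℕ} (hqp : q + 2 ≤ p) (hpq : p + q ≤ M) :
    entryWeight M p * entryWeight M q ≤ entryWeight M (p - 1) * entryWeight M (q + 1) := by
  obtain ⟨p, rfl⟩ : ∃ p', p = p' + 1 := ⟨p - 1, by omega⟩
  rw [Nat.add_sub_cancel, ← entryWeight_succ_mul (a := p) (by omega),
    ← entryWeight_succ_mul (a := q) (by omega)]
  have key : ((M - q : ℕ) : ℝ) * (q + 1 : ℕ) ≤ ((M - p : ℕ) : ℝ) * (p + 1 : ℕ) := by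
    have hqp' : (q : ℝ) ≤ p := by exact_mod_cast (by omega : q ≤ p)
    have hpq' : (p : ℝ) + q + 1 ≤ M := by exact_mod_cast (by omega : p + q + 1 ≤ M)
    rw [Nat.cast_sub (by omega), Nat.cast_sub (by omega)]
    push_cast
    nlinarith [mul_nonneg (sub_nonneg.2 hqp') (sub_nonneg.2 hpq')]
  have h0 := (entryWeight_pos M (p + 1)).le
  have h1 := (entryWeight_pos M (q + 1)).le
  calc entryWeight M (p + 1) * (entryWeight M (q + 1) * ((M - q : ℕ) * (q + 1 : ℕ)))
      = entryWeight M (p + 1) * entryWeight M (q + 1) * ((M - q : ℕ) * (q + 1 : ℕ)) := by ring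
    _ ≤ entryWeight M (p + 1) * entryWeight M (q + 1) * ((M - p : ℕ) * (p + 1 : ℕ)) := by gcongr
    _ = _ := by ring

end entryWeight

@[to_additive]
theorem prod_univ_eq_mul_mul_prod_compl_pair {ι R : Type*} [Fintype ι] [DecidableEq ι]
    [CommMonoid R] (f : ι → R) {i j : ι} (hij : i ≠ j) :
    ∏ x, f x = f i * f j * ∏ x ∈ {i, j}ᶜ, f x := by
  rw [← prod_mul_prod_compl {i, j}, prod_pair hij]

theorem exists_exchange_step {ι : Type*} [Fintype ι] [DecidableEq ι] {g : ℕ → ℝ} {M : ℕ}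
    (hg : ∀ n, 0 ≤ g n)
    (hexch : ∀ p q, q + 2 ≤ p → p + q ≤ M → g p * g q ≤ g (p - 1) * g (q + 1))
    {a : ι → ℕ} (ha : ∑ i, a i = M) {i j : ι} (hij : a j + 1 < a i) :
    ∃ b : ι → ℕ, ∑ x, b x = M ∧ ∑ x, b x ^ 2 < ∑ x, a x ^ 2 ∧
      ∏ x, g (a x) ≤ ∏ x, g (b x) := by
  have hne : i ≠ j := by rintro rfl; omega
  set b := Function.update (Function.update a i (a i - 1)) j (a j + 1)
  have hbi : b i = a i - 1 := by simp [b, hne]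
  have hbj : b j = a j + 1 := by simp [b]
  have hrest : ∀ x ∈ ({i, j} : Finset ι)ᶜ, b x = a x := by
    intro x hx
    simp only [mem_compl, mem_insert, mem_singleton, not_or] at hx
    simp [b, hx.1, hx.2]
  have hsum := sum_univ_eq_add_add_sum_compl_pair a hne
  have hsumb := sum_univ_eq_add_add_sum_compl_pair b hne
  have hsq := sum_univ_eq_add_add_sum_compl_pair (fun x => a x ^ 2) hne
  have hsqb := sum_univ_eq_add_add_sum_compl_pair (fun x => b x ^ 2) hne
  have hrest₁ : ∑ x ∈ {i, j}ᶜ, b x = ∑ x ∈ {i, j}ᶜ, a x := sum_congr rfl hrest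
  have hrest₂ : ∑ x ∈ {i, j}ᶜ, b x ^ 2 = ∑ x ∈ {i, j}ᶜ, a x ^ 2 :=
    sum_congr rfl fun x hx => by rw [hrest x hx]
  have hrest₃ : ∏ x ∈ {i, j}ᶜ, g (b x) = ∏ x ∈ {i, j}ᶜ, g (a x) :=
    prod_congr rfl fun x hx => by rw [hrest x hx]
  have hsq_lt : b i ^ 2 + b j ^ 2 < a i ^ 2 + a j ^ 2 := by
    obtain ⟨c, hc⟩ : ∃ c, a i = c + 1 := ⟨a i - 1, by omega⟩
    have hjc : a j < c := by omega
    rw [hbi, hbj, hc, Nat.add_sub_cancel]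
    nlinarith
  refine ⟨b, by omega, by omega, ?_⟩
  rw [prod_univ_eq_mul_mul_prod_compl_pair (fun x => g (a x)) hne,
    prod_univ_eq_mul_mul_prod_compl_pair (fun x => g (b x)) hne, hrest₃, hbi, hbj]
  exact mul_le_mul_of_nonneg_right (hexch _ _ (by omega) (by omega))
    (prod_nonneg fun x _ => hg _)

theorem prod_le_of_exchange {ι : Type*} [Fintype ι] [DecidableEq ι] {g : ℕ → ℝ} {M : ℕ} {B : ℝ}
    (hg : ∀ n, 0 ≤ g n)
    (hexch : ∀ p q, q + 2 ≤ p → p + q ≤ M → g p * g q ≤ g (p - 1) * g (q + 1))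
    (hbal : ∀ a : ι → ℕ, ∑ i, a i = M → (∀ i j, a i ≤ a j + 1) → ∏ i, g (a i) ≤ B)
    (a : ι → ℕ) (ha : ∑ i, a i = M) : ∏ i, g (a i) ≤ B := by
  induction hN : ∑ i, a i ^ 2 using Nat.strong_induction_on generalizing a with
  | _ N ih =>
  by_cases hb : ∀ i j, a i ≤ a j + 1
  · exact hbal a ha hb
  push Not at hb
  obtain ⟨i, j, hij⟩ := hb
  obtain ⟨b, hb, hlt, hle⟩ := exists_exchange_step hg hexch ha hij
  exact hle.trans (ih _ (hN ▸ hlt) b hb rfl)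

theorem div_card_le_of_balanced {ι : Type*} [Fintype ι] {a : ι → ℕ}
    (hbal : ∀ i j, a i ≤ a j + 1) (j : ι) : (∑ i, a i) / Fintype.card ι ≤ a j := by
  have hlt : ∑ i, a i < ∑ _i : ι, (a j + 1) :=
    sum_lt_sum (fun i _ => hbal i j) ⟨j, mem_univ j, Nat.lt_succ_self _⟩
  rw [sum_const, card_univ, smul_eq_mul, mul_comm] at hlt
  exact Nat.lt_succ_iff.mp ((Nat.div_lt_iff_lt_mul (Fintype.card_pos_iff.2 ⟨j⟩)).2 hlt)

theorem prod_entryWeight_le {ι : Type*} [Fintype ι] [DecidableEq ι] {M : ℕ} (a : ι → ℕ)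
    (ha : ∑ i, a i = M) :
    ∏ i, entryWeight M (a i) ≤ entryWeight M (M / Fintype.card ι) ^ Fintype.card ι := by
  refine prod_le_of_exchange (fun n => (entryWeight_pos M n).le)
    (fun _ _ => entryWeight_mul_le_mul_of_exchange) (fun b hb hbal => ?_) a ha
  calc ∏ i, entryWeight M (b i) ≤ ∏ _i : ι, entryWeight M (M / Fintype.card ι) :=
        prod_le_prod (fun i _ => (entryWeight_pos M _).le)
          fun i _ => entryWeight_antitone M (hb ▸ div_card_le_of_balanced hbal i)
    _ = _ := by rw [prod_const, card_univ]

def semimagicSquares (k M : ℕ) : Finset (Fin k → Fin k → Fin (M + 1)) :=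
  univ.filter fun A => (∀ i, ∑ j, (A i j : ℕ) = M) ∧ ∀ j, ∑ i, (A i j : ℕ) = M

noncomputable def matrixWeight {k M : ℕ} (A : Fin k → Fin k → Fin (M + 1)) : ℝ :=
  ∏ i, ∏ j, entryWeight M (A i j)

theorem matrixWeight_nonneg {k M : ℕ} (A : Fin k → Fin k → Fin (M + 1)) : 0 ≤ matrixWeight A :=
  prod_nonneg fun _ _ => prod_nonneg fun _ _ => (entryWeight_pos M _).le

theorem sum_matrixWeight_le (k M : ℕ) :
    ∑ A ∈ semimagicSquares k M, matrixWeight A ≤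
      ((M : ℝ) + 1) ^ (k * k) * entryWeight M (M / k) ^ (k * k) := by
  have hterm : ∀ A ∈ semimagicSquares k M, matrixWeight A ≤ entryWeight M (M / k) ^ (k * k) := by
    intro A hA
    have hrow := (mem_filter.1 hA).2.1
    calc matrixWeight A ≤ ∏ _i : Fin k, entryWeight M (M / k) ^ k :=
          prod_le_prod (fun i _ => prod_nonneg fun j _ => (entryWeight_pos M _).le) fun i _ => by
            simpa using prod_entryWeight_le (fun j => (A i j : ℕ)) (hrow i)
      _ = entryWeight M (M / k) ^ (k * k) := by simp [pow_mul]
  have hcard : ((semimagicSquares k M).card : ℝ) ≤ ((M : ℝ) + 1) ^ (k * k) := by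
    have := card_filter_le (univ : Finset (Fin k → Fin k → Fin (M + 1))) fun A =>
      (∀ i, ∑ j, (A i j : ℕ) = M) ∧ ∀ j, ∑ i, (A i j : ℕ) = M
    simp only [card_univ, Fintype.card_pi, Fintype.card_fin, prod_const] at this
    exact_mod_cast this.trans_eq (by rw [← pow_mul])
  calc ∑ A ∈ semimagicSquares k M, matrixWeight A
      ≤ (semimagicSquares k M).card • entryWeight M (M / k) ^ (k * k) :=
        sum_le_card_nsmul _ _ _ hterm
    _ ≤ _ := by
      rw [nsmul_eq_mul]
      exact mul_le_mul_of_nonneg_right hcard (pow_nonneg (entryWeight_pos M _).le _)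

def circulant (k M : ℕ) (i j : Fin k) : ℕ :=
  M / k + if ((i + j : Fin k) : ℕ) < M % k then 1 else 0

section circulant

variable {k : ℕ} (M : ℕ)

theorem sum_ite_val_lt_mod_comp_equiv [NeZero k] (e : Fin k ≃ Fin k) :
    ∑ j, (if ((e j : Fin k) : ℕ) < M % k then 1 else 0) = M % k := by
  rw [e.sum_comp (fun t : Fin k => if (t : ℕ) < M % k then 1 else 0), sum_boole,
    Fin.card_filter_val_lt, min_eq_right (Nat.mod_lt M (NeZero.pos k)).le, Nat.cast_id]

theorem circulant_row_sum (i : Fin k) : ∑ j, circulant k M i j = M := by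
  have : NeZero k := NeZero.of_pos i.pos
  simp only [circulant, sum_add_distrib, sum_const, card_univ, Fintype.card_fin, smul_eq_mul]
  convert Nat.div_add_mod M k using 2
  exact sum_ite_val_lt_mod_comp_equiv M (Equiv.addLeft i)

theorem circulant_col_sum (j : Fin k) : ∑ i, circulant k M i j = M := by
  have : NeZero k := NeZero.of_pos j.pos
  simp only [circulant, sum_add_distrib, sum_const, card_univ, Fintype.card_fin, smul_eq_mul]
  convert Nat.div_add_mod M k using 2
  exact sum_ite_val_lt_mod_comp_equiv M (Equiv.addRight j)

theorem circulant_le (i j : Fin k) : circulant k M i j ≤ M := by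
  unfold circulant
  split_ifs with h
  · have hr : M % k < k := Nat.mod_lt M i.pos
    have hr0 : 0 < M % k := lt_of_le_of_lt (Nat.zero_le _) h
    have hM : 0 < M := Nat.pos_of_ne_zero (by rintro rfl; simp at hr0)
    have := Nat.div_lt_self hM (by omega : 1 < k)
    omega
  · simpa using Nat.div_le_self M k

theorem entryWeight_div_le_mul_entryWeight_circulant (i j : Fin k) :
    entryWeight M (M / k) ≤ ((M : ℝ) + 1) ^ 2 * entryWeight M (circulant k M i j) := by
  unfold circulant
  split_ifs with h
  · have := circulant_le M i j
    rw [circulant, if_pos h] at this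
    exact entryWeight_le_mul_succ this
  · rw [add_zero]
    exact le_mul_of_one_le_left (entryWeight_pos M _).le
      (one_le_pow₀ (by linarith [M.cast_nonneg (α := ℝ)]))

end circulant

theorem entryWeight_pow_le_sum_matrixWeight (k M : ℕ) :
    entryWeight M (M / k) ^ (k * k) ≤
      ((M : ℝ) + 1) ^ (2 * (k * k)) * ∑ A ∈ semimagicSquares k M, matrixWeight A := by
  let C : Fin k → Fin k → Fin (M + 1) := fun i j =>
    ⟨circulant k M i j, Nat.lt_succ_of_le (circulant_le M i j)⟩
  have hC : C ∈ semimagicSquares k M :=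
    mem_filter.2 ⟨mem_univ _, circulant_row_sum M, circulant_col_sum M⟩
  calc entryWeight M (M / k) ^ (k * k) = ∏ _i : Fin k, ∏ _j : Fin k, entryWeight M (M / k) := by
        simp [pow_mul]
    _ ≤ ∏ i, ∏ j, (((M : ℝ) + 1) ^ 2 * entryWeight M (C i j)) :=
        prod_le_prod (fun i _ => prod_nonneg fun j _ => (entryWeight_pos M _).le) fun i _ =>
          prod_le_prod (fun j _ => (entryWeight_pos M _).le) fun j _ =>
            entryWeight_div_le_mul_entryWeight_circulant M i j
    _ = ((M : ℝ) + 1) ^ (2 * (k * k)) * matrixWeight C := by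
        simp [matrixWeight, prod_mul_distrib, pow_mul]
    _ ≤ _ := mul_le_mul_of_nonneg_left
        (single_le_sum (fun A _ => matrixWeight_nonneg A) hC) (by positivity)

theorem mul_log_sub_le_log_factorial (n : ℕ) : n * log n - n ≤ log n ! := by
  rcases Nat.eq_zero_or_pos n with rfl | hn
  · simp
  have h := pow_div_factorial_le_exp (n : ℝ) n.cast_nonneg n
  rw [← log_le_log_iff (by positivity) (exp_pos _), log_exp,
    log_div (by positivity) (by positivity), log_pow] at h
  linarith

theorem log_factorial_le (n : ℕ) : log n ! ≤ n * log n - n + 1 + log n := by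
  rcases n with _ | m
  · simp
  have h := Stirling.log_stirlingSeq'_antitone (Nat.zero_le m)
  simp only [Function.comp_apply, Nat.succ_eq_add_one, zero_add, Stirling.stirlingSeq_one] at h
  rw [Stirling.log_stirlingSeq_formula, log_div (exp_pos 1).ne' (by positivity), log_exp,
    log_sqrt zero_le_two, log_mul two_ne_zero (by positivity),
    log_div (by positivity) (exp_pos 1).ne', log_exp] at h
  have : 0 ≤ log ((m + 1 : ℕ) : ℝ) := log_nonneg (by simp)
  linarith

theorem tendsto_log_add_one_div_natCast :
    Tendsto (fun M : ℕ => log (M + 1) / M) atTop (𝓝 0) := by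
  have h := (tendsto_pow_log_div_mul_add_atTop 1 (-1) 1 one_ne_zero).comp
    (tendsto_atTop_add_const_right _ 1 tendsto_natCast_atTop_atTop)
  refine h.congr fun M => ?_
  simp

theorem tendsto_log_factorial_div {u : ℕ → ℕ} {α : ℝ} (hu : ∀ M, u M ≤ M)
    (h : Tendsto (fun M => (u M : ℝ) / M) atTop (𝓝 α)) :
    Tendsto (fun M => (log (u M)! - u M * log M) / M) atTop (𝓝 (α * log α - α)) := by
  set E : ℕ → ℝ := fun M => log (u M)! - (u M * log (u M) - u M)
  have hmain : Tendsto (fun M => (u M : ℝ) / M * log ((u M : ℝ) / M) - u M / M) atTop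
      (𝓝 (α * log α - α)) :=
    ((continuous_mul_log.tendsto α).comp h).sub h
  have hE : Tendsto (fun M => E M / M) atTop (𝓝 0) := by
    have hup : Tendsto (fun M : ℕ => 1 / (M : ℝ) + log (M + 1) / M) atTop (𝓝 0) := by
      simpa using tendsto_one_div_atTop_nhds_zero_nat.add tendsto_log_add_one_div_natCast
    refine squeeze_zero (fun M => div_nonneg ?_ M.cast_nonneg) (fun M => ?_) hup
    · linarith [mul_log_sub_le_log_factorial (u M)]
    · have hlog : log (u M) ≤ log (M + 1) := by
        rcases Nat.eq_zero_or_pos (u M) with h0 | h0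
        · rw [h0, Nat.cast_zero, log_zero]
          exact log_nonneg (by linarith [M.cast_nonneg (α := ℝ)])
        · exact log_le_log (by exact_mod_cast h0) (by linarith [(Nat.cast_le (α := ℝ)).2 (hu M)])
      rw [← add_div]
      gcongr
      linarith [log_factorial_le (u M)]
  refine (by simpa using hmain.add hE : Tendsto _ atTop _).congr' ?_
  filter_upwards [eventually_ne_atTop 0] with M hM
  have hM' : (M : ℝ) ≠ 0 := by exact_mod_cast hM
  rcases eq_or_ne (u M) 0 with h0 | h0
  · simp [E, h0]
  · rw [log_div (by exact_mod_cast h0) hM']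
    field_simp
    ring

theorem tendsto_natCast_div_div {k : ℕ} (hk : 0 < k) :
    Tendsto (fun M : ℕ => ((M / k : ℕ) : ℝ) / M) atTop (𝓝 (1 / k)) := by
  have hk' : (0 : ℝ) < k := by exact_mod_cast hk
  have h := (tendsto_nat_floor_div_atTop.comp
    ((tendsto_natCast_atTop_atTop (R := ℝ)).atTop_div_const hk')).mul_const (1 / (k : ℝ))
  rw [one_mul] at h
  refine h.congr' ?_
  filter_upwards [eventually_ne_atTop 0] with M hM
  have hM' : (M : ℝ) ≠ 0 := by exact_mod_cast hM
  simp only [Function.comp_apply, Nat.floor_div_eq_div]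
  field_simp

theorem tendsto_log_div_natCast : Tendsto (fun M : ℕ => log M / M) atTop (𝓝 0) := by
  have h := (tendsto_pow_log_div_mul_add_atTop 1 0 1 one_ne_zero).comp
    (tendsto_natCast_atTop_atTop (R := ℝ))
  exact h.congr fun M => by simp

theorem log_factorial_zpow_mul_entryWeight_pow_div {k M : ℕ} (hM : M ≠ 0) :
    log ((M ! : ℝ) ^ (2 * (k : ℤ) - (k : ℤ) ^ 2) * entryWeight M (M / k) ^ (k * k)) / M =
      (2 * k - k ^ 2) * ((log M ! - M * log M) / M) +
        k ^ 2 * ((log (M - M / k)! - (M - M / k : ℕ) * log M) / M -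
          (log (M / k)! - (M / k : ℕ) * log M) / M) +
        2 * k * (M % k : ℕ) * (log M / M) := by
  have hM' : (M : ℝ) ≠ 0 := by exact_mod_cast hM
  have hfac : ∀ n : ℕ, (n ! : ℝ) ≠ 0 := fun n => by positivity
  have hdecomp : (M : ℝ) = k * (M / k : ℕ) + (M % k : ℕ) := by
    exact_mod_cast (Nat.div_add_mod M k).symm
  rw [log_mul (zpow_ne_zero _ (hfac M)) (pow_ne_zero _ (entryWeight_pos M _).ne'), log_zpow,
    log_pow, entryWeight, log_div (hfac _) (hfac _), Nat.cast_sub (Nat.div_le_self M k)]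
  field_simp
  push_cast
  linear_combination (2 * (k : ℝ) * log M) * hdecomp

theorem tendsto_log_factorial_zpow_mul_entryWeight_pow {k : ℕ} (hk : 2 ≤ k) :
    Tendsto (fun M : ℕ =>
        log ((M ! : ℝ) ^ (2 * (k : ℤ) - (k : ℤ) ^ 2) * entryWeight M (M / k) ^ (k * k)) / M)
      atTop (𝓝 (log (((k : ℝ) - 1) ^ (k * (k - 1)) / (k : ℝ) ^ (k * (k - 2))))) := by
  have hk0 : 0 < k := by omega
  have hk' : (1 : ℝ) < k := by exact_mod_cast hk
  have hdiv := tendsto_natCast_div_div hk0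
  have hself : Tendsto (fun M : ℕ => (M : ℝ) / M) atTop (𝓝 1) :=
    tendsto_const_nhds.congr' <| by
      filter_upwards [eventually_ne_atTop 0] with M hM
      rw [div_self (by exact_mod_cast hM)]
  have hsub : Tendsto (fun M : ℕ => ((M - M / k : ℕ) : ℝ) / M) atTop (𝓝 (1 - 1 / k)) :=
    (hself.sub hdiv).congr fun M => by rw [Nat.cast_sub (Nat.div_le_self M k), sub_div]
  have hD₁ := tendsto_log_factorial_div (fun M => le_rfl) hself
  have hD₂ := tendsto_log_factorial_div (fun M => Nat.sub_le M (M / k)) hsub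
  have hD₃ := tendsto_log_factorial_div (fun M => Nat.div_le_self M k) hdiv
  have hrem : Tendsto (fun M : ℕ => 2 * k * ((M % k : ℕ) : ℝ) * (log M / M)) atTop (𝓝 0) := by
    refine squeeze_zero' (Eventually.of_forall fun M => ?_) ?_
      (by simpa using tendsto_log_div_natCast.const_mul (2 * (k : ℝ) * k))
    · exact mul_nonneg (by positivity) (div_nonneg (log_natCast_nonneg M) M.cast_nonneg)
    · filter_upwards with M
      gcongr
      exact (Nat.mod_lt M hk0).le
  have hlim := ((hD₁.const_mul (2 * (k : ℝ) - (k : ℝ) ^ 2)).add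
    ((hD₂.sub hD₃).const_mul ((k : ℝ) ^ 2))).add hrem
  convert hlim.congr' ?_ using 2
  · have hk1 : (0 : ℝ) < k - 1 := by linarith
    rw [log_div (by positivity) (by positivity), log_pow, log_pow, log_one, one_div, log_inv,
      show 1 - (k : ℝ)⁻¹ = (k - 1) / k by field_simp, log_div hk1.ne' (by positivity)]
    push_cast [Nat.cast_sub (by omega : 1 ≤ k), Nat.cast_sub (by omega : 2 ≤ k)]
    field_simp
    ring
  · filter_upwards [eventually_ne_atTop 0] with M hM
    exact (log_factorial_zpow_mul_entryWeight_pow_div hM).symm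

theorem tendsto_rpow_one_div_of_le_pow_mul {a b : ℕ → ℝ} {ℓ : ℝ} {c d : ℕ} (ha : ∀ M, 0 < a M)
    (hab : ∀ M, a M ≤ ((M : ℝ) + 1) ^ c * b M) (hba : ∀ M, b M ≤ ((M : ℝ) + 1) ^ d * a M)
    (h : Tendsto (fun M => log (a M) / M) atTop (𝓝 ℓ)) :
    Tendsto (fun M : ℕ => b M ^ ((1 : ℝ) / M)) atTop (𝓝 (exp ℓ)) := by
  have hb : ∀ M, 0 < b M := fun M =>
    pos_of_mul_pos_right ((ha M).trans_le (hab M)) (by positivity)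
  have hlog : ∀ M : ℕ, ∀ x y : ℝ, 0 < x → 0 < y → ∀ e : ℕ, x ≤ ((M : ℝ) + 1) ^ e * y →
      log x / M ≤ log y / M + e * (log (M + 1) / M) := by
    intro M x y hx hy e hxy
    have := log_le_log hx hxy
    rw [log_mul (by positivity) hy.ne', log_pow] at this
    rw [mul_div_assoc', ← add_div]
    exact div_le_div_of_nonneg_right (by linarith) M.cast_nonneg
  have herr : ∀ e : ℕ,
      Tendsto (fun M : ℕ => log (a M) / M + e * (log (M + 1) / M)) atTop (𝓝 ℓ) :=
    fun e => by simpa using h.add (tendsto_log_add_one_div_natCast.const_mul (e : ℝ))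
  have hlow : Tendsto (fun M : ℕ => log (a M) / M - c * (log (M + 1) / M)) atTop (𝓝 ℓ) := by
    simpa using h.sub (tendsto_log_add_one_div_natCast.const_mul (c : ℝ))
  have hlogb : Tendsto (fun M => log (b M) / M) atTop (𝓝 ℓ) :=
    tendsto_of_tendsto_of_tendsto_of_le_of_le hlow (herr d)
      (fun M => by linarith [hlog M _ _ (ha M) (hb M) c (hab M)])
      (fun M => hlog M _ _ (hb M) (ha M) d (hba M))
  refine ((continuous_exp.tendsto ℓ).comp hlogb).congr fun M => ?_
  rw [Function.comp_apply, rpow_def_of_pos (hb M), mul_one_div]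

/-- **Proposition 3(b), first limit.** For fixed k ≥ 3,
lim_{M→∞} [(M!)^{2k−k²}]^{1/M} (Z_{k,M})^{1/M} = (k−1)^{k(k−1)} / k^{k(k−2)},
where Z_{k,M} = Σ_{A ∈ A_{k,M}} ∏_{i,j} (M−a_{i,j})!/a_{i,j}!. -/
theorem ZkM_growth_rate
    (k : ℕ) (hk : 3 ≤ k)
    (Z : ℕ → ℝ)
    (hZ : ∀ M, Z M = ∑ A ∈ Finset.univ.filter
        (fun A : Fin k → Fin k → Fin (M + 1) =>
          (∀ i, ∑ j, (A i j : ℕ) = M) ∧ ∀ j, ∑ i, (A i j : ℕ) = M),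
        ∏ i, ∏ j, ((M - (A i j : ℕ)).factorial : ℝ) / ((A i j : ℕ).factorial : ℝ)) :
    Filter.Tendsto
      (fun M : ℕ =>
        ((M.factorial : ℝ) ^ (2 * (k : ℤ) - (k : ℤ) ^ 2)) ^ ((1 : ℝ) / M) *
          (Z M) ^ ((1 : ℝ) / M))
      Filter.atTop
      (nhds (((k : ℝ) - 1) ^ (k * (k - 1)) / (k : ℝ) ^ (k * (k - 2)))) := by
  have hZ' : ∀ M, Z M = ∑ A ∈ semimagicSquares k M, matrixWeight A := hZ
  set F : ℕ → ℝ := fun M => (M ! : ℝ) ^ (2 * (k : ℤ) - (k : ℤ) ^ 2)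
  have hF : ∀ M, 0 < F M := fun M => zpow_pos (by positivity) _
  have hL : (0 : ℝ) < ((k : ℝ) - 1) ^ (k * (k - 1)) / (k : ℝ) ^ (k * (k - 2)) := by
    have : (1 : ℝ) < k := by exact_mod_cast (by omega : 1 < k)
    apply div_pos <;> apply pow_pos <;> linarith
  have h := tendsto_rpow_one_div_of_le_pow_mul (b := fun M => F M * Z M) (c := 2 * (k * k))
    (d := k * k) (fun M => mul_pos (hF M) (pow_pos (entryWeight_pos M _) _))
    (fun M => by
      rw [hZ', mul_left_comm]
      exact mul_le_mul_of_nonneg_left (entryWeight_pow_le_sum_matrixWeight k M) (hF M).le)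
    (fun M => by
      rw [hZ', mul_left_comm]
      exact mul_le_mul_of_nonneg_left (sum_matrixWeight_le k M) (hF M).le)
    (tendsto_log_factorial_zpow_mul_entryWeight_pow (by omega))
  rw [exp_log hL] at h
  exact h.congr fun M =>
    mul_rpow (hF M).le (hZ' M ▸ sum_nonneg fun A _ => matrixWeight_nonneg A)
end

section
/- For every integer k ≥ 2, the function φ : ℤ_+^k → ℝ defined by φ(x_1,…,x_k) = ∏_{j=1}^k (Σ_{ℓ≠j} x_ℓ)! / (x_j)! is Schur-concave: for all x, y ∈ ℤ_+^k such that x is majorized by y, φ(x) ≥ φ(y). -/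
/-!
On vectors with entry sum `S` we have `φ v = ∏ j, g (v j)` with `g m = (S - m)! / m!`, and
`g m = (S - m) (m + 1) g (m + 1)`. So moving one unit from an entry `a` to an entry `b ≤ a - 2`
does not decrease the product as long as `a + b ≤ S`, since `(S - b) (b + 1) ≤ (S - a + 1) a`.
(`g` is not log-concave on all of `[0, S]`, so Karamata's inequality does not apply directly.)

Let `x ≺ y` be sorted decreasingly with `x ≠ y`. Take `j` to be the first index with `y j < x j`.
Then the prefix sums of `y` strictly exceed those of `x` at `j`, so there is an `i < j` with
`x i < y i`, and the strict inequality holds on all of `(i, j]`. Hence moving one unit from `y i`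
to `y j` keeps `x ≺ y` and strictly decreases `∑ m, y m ^ 2`. Induction on this quantity, sorting
again after each move, gives `φ y ≤ φ x`.
-/

open Finset Function

lemma sum_le_sum_of_card_eq_of_forall_le {ι M : Type*} [AddCommMonoid M] [LinearOrder M]
    [IsOrderedAddMonoid M] {f : ι → M} {A B : Finset ι} (hcard : #A = #B)
    (hle : ∀ a ∈ A, ∀ b ∈ B, f a ≤ f b) : ∑ a ∈ A, f a ≤ ∑ b ∈ B, f b := by
  rcases B.eq_empty_or_nonempty with rfl | hB
  · simp [card_eq_zero.1 hcard]
  calc ∑ a ∈ A, f a ≤ #A • B.inf' hB f :=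
        sum_le_card_nsmul _ _ _ fun a ha => le_inf' hB _ (hle a ha)
    _ = #B • B.inf' hB f := by rw [hcard]
    _ ≤ ∑ b ∈ B, f b := card_nsmul_le_sum _ _ _ fun b hb => inf'_le _ hb

namespace Majorization

variable {k : ℕ}

def topSum (v : Fin k → ℕ) (l : ℕ) : ℕ :=
  (powersetCard l (univ : Finset (Fin k))).sup fun s => ∑ i ∈ s, v i

def prefixSum (v : Fin k → ℕ) (l : ℕ) : ℕ :=
  ∑ i ∈ univ.filter (fun i : Fin k => (i : ℕ) < l), v i

def IsMajorizedBy (x y : Fin k → ℕ) : Prop :=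
  ∑ i, x i = ∑ i, y i ∧ ∀ l, 1 ≤ l → l ≤ k - 1 → topSum x l ≤ topSum y l

lemma sum_le_topSum (v : Fin k → ℕ) (s : Finset (Fin k)) : ∑ i ∈ s, v i ≤ topSum v #s :=
  le_sup (f := fun s => ∑ i ∈ s, v i) (mem_powersetCard.2 ⟨subset_univ s, rfl⟩)

lemma topSum_le_topSum_comp_perm (v : Fin k → ℕ) (σ : Equiv.Perm (Fin k)) (l : ℕ) :
    topSum v l ≤ topSum (v ∘ σ) l := by
  refine Finset.sup_le fun s hs => ?_
  obtain ⟨-, rfl⟩ := mem_powersetCard.1 hs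
  simpa [sum_map] using sum_le_topSum (v ∘ σ) (s.map σ.symm.toEmbedding)

lemma topSum_comp_perm (v : Fin k → ℕ) (σ : Equiv.Perm (Fin k)) (l : ℕ) :
    topSum (v ∘ σ) l = topSum v l :=
  le_antisymm (by simpa [comp_assoc] using topSum_le_topSum_comp_perm (v ∘ σ) σ.symm l)
    (topSum_le_topSum_comp_perm v σ l)

lemma exists_antitone_comp_perm {α : Type*} [LinearOrder α] (v : Fin k → α) :
    ∃ σ : Equiv.Perm (Fin k), Antitone (v ∘ σ) :=
  ⟨Tuple.sort (OrderDual.toDual ∘ v), Tuple.monotone_sort (OrderDual.toDual ∘ v)⟩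

lemma prefixSum_zero (v : Fin k → ℕ) : prefixSum v 0 = 0 := by
  simp [prefixSum]

lemma prefixSum_of_le (v : Fin k → ℕ) {l : ℕ} (hl : k ≤ l) : prefixSum v l = ∑ i, v i := by
  simp [prefixSum, fun i : Fin k => i.isLt.trans_le hl]

lemma prefixSum_succ (v : Fin k → ℕ) {t : ℕ} (ht : t < k) :
    prefixSum v (t + 1) = prefixSum v t + v ⟨t, ht⟩ := by
  have : univ.filter (fun i : Fin k => (i : ℕ) < t + 1) =
      insert ⟨t, ht⟩ (univ.filter fun i : Fin k => (i : ℕ) < t) := by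
    ext i
    simp only [mem_filter, mem_univ, true_and, mem_insert, Fin.ext_iff]
    omega
  rw [prefixSum, this, sum_insert (by simp), add_comm, prefixSum]

lemma prefixSum_le_topSum (v : Fin k → ℕ) {l : ℕ} (hl : l ≤ k) : prefixSum v l ≤ topSum v l := by
  simpa [prefixSum, Fin.card_filter_val_lt, hl] using sum_le_topSum v {i | (i : ℕ) < l}

lemma sum_le_prefixSum {v : Fin k → ℕ} (hv : Antitone v) (s : Finset (Fin k)) :
    ∑ i ∈ s, v i ≤ prefixSum v #s := by
  set P : Finset (Fin k) := {i | (i : ℕ) < #s}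
  have hP : #P = #s := by
    simpa [P, Fin.card_filter_val_lt] using s.card_le_univ
  rw [prefixSum, ← sum_inter_add_sum_sdiff s P, ← sum_inter_add_sum_sdiff P s, inter_comm]
  refine Nat.add_le_add_left (sum_le_sum_of_card_eq_of_forall_le (card_sdiff_comm hP.symm) ?_) _
  intro a ha b hb
  simp only [P, mem_sdiff, mem_filter, mem_univ, true_and] at ha hb
  exact hv (Fin.le_def.2 (by omega))

lemma topSum_eq_prefixSum {v : Fin k → ℕ} (hv : Antitone v) {l : ℕ} (hl : l ≤ k) :
    topSum v l = prefixSum v l := by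
  refine le_antisymm (Finset.sup_le fun s hs => ?_) (prefixSum_le_topSum v hl)
  obtain ⟨-, rfl⟩ := mem_powersetCard.1 hs
  exact sum_le_prefixSum hv s

section

variable {x y : Fin k → ℕ}

lemma IsMajorizedBy.comp_perm_left (h : IsMajorizedBy x y) (σ : Equiv.Perm (Fin k)) :
    IsMajorizedBy (x ∘ σ) y :=
  ⟨(Equiv.sum_comp σ x).trans h.1, fun l h₁ h₂ => (topSum_comp_perm x σ l).trans_le (h.2 l h₁ h₂)⟩

lemma IsMajorizedBy.comp_perm_right (h : IsMajorizedBy x y) (σ : Equiv.Perm (Fin k)) :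
    IsMajorizedBy x (y ∘ σ) :=
  ⟨h.1.trans (Equiv.sum_comp σ y).symm,
    fun l h₁ h₂ => (h.2 l h₁ h₂).trans_eq (topSum_comp_perm y σ l).symm⟩

lemma IsMajorizedBy.prefixSum_le (h : IsMajorizedBy x y) (hx : Antitone x) (hy : Antitone y)
    {l : ℕ} (hl : l ≤ k) : prefixSum x l ≤ prefixSum y l := by
  rcases Nat.eq_zero_or_pos l with rfl | hl₀
  · simp [prefixSum_zero]
  rcases hl.eq_or_lt with rfl | hlk
  · rw [prefixSum_of_le x le_rfl, prefixSum_of_le y le_rfl, h.1]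
  rw [← topSum_eq_prefixSum hx hl, ← topSum_eq_prefixSum hy hl]
  exact h.2 l hl₀ (by omega)

lemma isMajorizedBy_of_prefixSum_le (hx : Antitone x) (hsum : ∑ i, x i = ∑ i, y i)
    (h : ∀ l ≤ k, prefixSum x l ≤ prefixSum y l) : IsMajorizedBy x y :=
  ⟨hsum, fun l _ hl => (topSum_eq_prefixSum hx (by omega)).trans_le
    ((h l (by omega)).trans (prefixSum_le_topSum y (by omega)))⟩

end

section Transfer

variable {ι : Type*} [DecidableEq ι]

def transfer (z : ι → ℕ) (i j : ι) : ι → ℕ :=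
  update (update z i (z i - 1)) j (z j + 1)

variable {z : ι → ℕ} {i j : ι}

lemma transfer_add_single (hij : i ≠ j) (hz : 0 < z i) :
    transfer z i j + Pi.single i 1 = z + Pi.single j 1 := by
  funext m
  by_cases hmj : m = j
  · subst hmj; simp [transfer, hij.symm]
  by_cases hmi : m = i
  · subst hmi; simp [transfer, hmj]; omega
  simp [transfer, hmi, hmj]

lemma sum_transfer_add_ite (s : Finset ι) (hij : i ≠ j) (hz : 0 < z i) :
    ∑ m ∈ s, transfer z i j m + (if i ∈ s then 1 else 0) =
      ∑ m ∈ s, z m + (if j ∈ s then 1 else 0) := by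
  simpa [sum_add_distrib, sum_pi_single'] using
    congrArg (fun w => ∑ m ∈ s, w m) (transfer_add_single hij hz)

variable [Fintype ι]

@[to_additive]
lemma prod_eq_mul_mul_prod_erase {M : Type*} [CommMonoid M] (g : ι → M) (hij : i ≠ j) :
    ∏ m, g m = g i * g j * ∏ m ∈ (univ.erase i).erase j, g m := by
  rw [← mul_prod_erase univ g (mem_univ i),
    ← mul_prod_erase _ g (mem_erase.2 ⟨hij.symm, mem_univ j⟩), mul_assoc]

@[to_additive]
lemma prod_comp_transfer {M : Type*} [CommMonoid M] (f : ℕ → M) (hij : i ≠ j) :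
    ∏ m, f (transfer z i j m) =
      f (z i - 1) * f (z j + 1) * ∏ m ∈ (univ.erase i).erase j, f (z m) := by
  rw [prod_eq_mul_mul_prod_erase _ hij]
  refine congrArg₂ _ (by simp [transfer, hij]) (prod_congr rfl fun m hm => ?_)
  obtain ⟨hmj, hmi⟩ := by simpa using hm
  simp [transfer, hmi, hmj]

lemma sum_sq_transfer_lt (hgap : z j + 2 ≤ z i) :
    ∑ m, transfer z i j m ^ 2 < ∑ m, z m ^ 2 := by
  have hij : i ≠ j := by rintro rfl; omega
  rw [sum_comp_transfer (· ^ 2) hij, sum_eq_add_add_sum_erase (z · ^ 2) hij]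
  obtain ⟨c, hc⟩ : ∃ c, z i = z j + 2 + c := ⟨z i - (z j + 2), by omega⟩
  have : (z i - 1) ^ 2 + (z j + 1) ^ 2 < z i ^ 2 + z j ^ 2 := by
    rw [hc, show z j + 2 + c - 1 = z j + 1 + c by omega]
    nlinarith
  omega

lemma prod_le_prod_comp_transfer {R : Type*} [CommSemiring R] [PartialOrder R] [IsOrderedRing R]
    {f : ℕ → R} (hf₀ : ∀ m, 0 ≤ f m) (hij : i ≠ j)
    (h : f (z i) * f (z j) ≤ f (z i - 1) * f (z j + 1)) :
    ∏ m, f (z m) ≤ ∏ m, f (transfer z i j m) := by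
  rw [prod_comp_transfer f hij, prod_eq_mul_mul_prod_erase _ hij]
  exact mul_le_mul_of_nonneg_right h (prod_nonneg fun m _ => hf₀ _)

end Transfer

lemma IsMajorizedBy.exists_transfer {x z : Fin k → ℕ} (h : IsMajorizedBy x z) (hx : Antitone x)
    (hz : Antitone z) (hne : x ≠ z) : ∃ i j, z j + 2 ≤ z i ∧ IsMajorizedBy x (transfer z i j) := by
  have hexists : (univ.filter fun m => z m < x m).Nonempty := by
    by_contra! hempty
    refine hne (funext fun m => ((sum_eq_sum_iff_of_le fun m _ => ?_).1 h.1) m (mem_univ m))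
    simpa using filter_eq_empty_iff.1 hempty (mem_univ m)
  obtain ⟨j, hj, hjmin⟩ := exists_min_image _ id hexists
  simp only [mem_filter, mem_univ, true_and, id] at hj hjmin
  have hbefore : ∀ m < j, x m ≤ z m := fun m hm => not_lt.1 fun h' => (hjmin m h').not_gt hm
  have hprefix : prefixSum x j < prefixSum z j := by
    have := h.prefixSum_le hx hz j.isLt
    rw [prefixSum_succ x j.isLt, prefixSum_succ z j.isLt, Fin.eta] at this
    omega
  obtain ⟨i, hi, hxi⟩ := exists_lt_of_sum_lt hprefix
  simp only [mem_filter, mem_univ, true_and] at hi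
  have hgap : z j + 2 ≤ z i := by
    have := hx (Fin.le_def.2 hi.le)
    omega
  have hij : i ≠ j := by rintro rfl; omega
  refine ⟨i, j, hgap, isMajorizedBy_of_prefixSum_le hx ?_ fun l hl => ?_⟩
  · have := sum_transfer_add_ite (z := z) univ hij (by omega)
    simp only [mem_univ, if_true] at this
    have := h.1
    omega
  have hstrict : (i : ℕ) < l → l ≤ j → prefixSum x l < prefixSum z l := fun hil hlj =>
    sum_lt_sum (fun m hm => hbefore m (Fin.lt_def.2 (by simp at hm; omega)))
      ⟨i, by simpa using hil, hxi⟩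
  have key :=
    sum_transfer_add_ite (z := z) (univ.filter fun m : Fin k => (m : ℕ) < l) hij (by omega)
  have := h.prefixSum_le hx hz hl
  simp only [mem_filter, mem_univ, true_and] at key
  change prefixSum _ l + _ = prefixSum z l + _ at key
  split_ifs at key <;> omega

section SchurConcave

variable {R : Type*} [CommSemiring R] [PartialOrder R] [IsOrderedRing R] {f : ℕ → R} {S : ℕ}

theorem _root_.Antitone.prod_le_prod_of_isMajorizedBy (hf₀ : ∀ m, 0 ≤ f m)
    (hf : ∀ a b, b + 2 ≤ a → a + b ≤ S → f a * f b ≤ f (a - 1) * f (b + 1))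
    {x y : Fin k → ℕ} (hx : Antitone x) (hS : ∑ i, x i = S) (h : IsMajorizedBy x y) :
    ∏ i, f (y i) ≤ ∏ i, f (x i) := by
  induction hn : ∑ i, y i ^ 2 using Nat.strong_induction_on generalizing y with
  | _ n ih =>
  obtain ⟨τ, hτ⟩ := exists_antitone_comp_perm y
  rw [← Equiv.prod_comp τ (fun i => f (y i))]
  by_cases hxy : x = y ∘ τ
  · rw [hxy]; rfl
  obtain ⟨i, j, hgap, hmaj⟩ := (h.comp_perm_right τ).exists_transfer hx hτ hxy
  have hij : i ≠ j := by rintro rfl; omega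
  have hpair : y (τ i) + y (τ j) ≤ S := by
    have := sum_eq_add_add_sum_erase (y ∘ τ) hij
    rw [← hS, h.1, ← Equiv.sum_comp τ]
    simp only [comp_apply] at this
    omega
  calc ∏ m, f (y (τ m)) ≤ ∏ m, f (transfer (y ∘ τ) i j m) :=
        prod_le_prod_comp_transfer hf₀ hij (hf _ _ hgap hpair)
    _ ≤ ∏ m, f (x m) := by
        refine ih _ ?_ hmaj rfl
        rw [← hn, ← Equiv.sum_comp τ (fun m => y m ^ 2)]
        exact sum_sq_transfer_lt hgap

theorem prod_le_prod_of_isMajorizedBy (hf₀ : ∀ m, 0 ≤ f m)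
    (hf : ∀ a b, b + 2 ≤ a → a + b ≤ S → f a * f b ≤ f (a - 1) * f (b + 1))
    {x y : Fin k → ℕ} (hS : ∑ i, x i = S) (h : IsMajorizedBy x y) :
    ∏ i, f (y i) ≤ ∏ i, f (x i) := by
  obtain ⟨σ, hσ⟩ := exists_antitone_comp_perm x
  rw [← Equiv.prod_comp σ (fun i => f (x i))]
  exact hσ.prod_le_prod_of_isMajorizedBy hf₀ hf ((Equiv.sum_comp σ x).trans hS)
    (h.comp_perm_left σ)

end SchurConcave

end Majorization

open Nat in
noncomputable def factorialRatio (S m : ℕ) : ℝ := ((S - m)! : ℝ) / (m ! : ℝ)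

lemma factorialRatio_pos (S m : ℕ) : 0 < factorialRatio S m := by
  unfold factorialRatio; positivity

lemma factorialRatio_eq_mul_succ {S m : ℕ} (hm : m < S) :
    factorialRatio S m = ((S - m) * (m + 1) : ℕ) * factorialRatio S (m + 1) := by
  obtain ⟨r, rfl⟩ : ∃ r, S = m + 1 + r := ⟨S - (m + 1), by omega⟩
  rw [factorialRatio, factorialRatio, show m + 1 + r - m = r + 1 by omega,
    show m + 1 + r - (m + 1) = r by omega, Nat.factorial_succ r, Nat.factorial_succ m]
  push_cast
  field_simp

lemma factorialRatio_mul_le {S a b : ℕ} (hab : b + 2 ≤ a) (hS : a + b ≤ S) :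
    factorialRatio S a * factorialRatio S b ≤
      factorialRatio S (a - 1) * factorialRatio S (b + 1) := by
  obtain ⟨c, rfl⟩ : ∃ c, a = c + 1 := ⟨a - 1, by omega⟩
  rw [Nat.add_sub_cancel, factorialRatio_eq_mul_succ (m := c) (by omega),
    factorialRatio_eq_mul_succ (m := b) (by omega)]
  have key : (S - b) * (b + 1) ≤ (S - c) * (c + 1) := by
    zify [show b ≤ S by omega, show c ≤ S by omega]
    nlinarith
  have hpos := mul_pos (factorialRatio_pos S (c + 1)) (factorialRatio_pos S (b + 1))
  have hkey : (((S - b) * (b + 1) : ℕ) : ℝ) ≤ ((S - c) * (c + 1) : ℕ) := by exact_mod_cast key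
  nlinarith

theorem phi_schur_concave_general
    (k : ℕ)
    (φ : (Fin k → ℕ) → ℝ)
    (hφ : ∀ x, φ x = ∏ j,
      ((∑ ℓ ∈ Finset.univ.erase j, x ℓ).factorial : ℝ) / ((x j).factorial : ℝ))
    (x y : Fin k → ℕ)
    (hsum : ∑ i, x i = ∑ i, y i)
    (hmaj : ∀ ℓ, 1 ≤ ℓ → ℓ ≤ k - 1 →
      (Finset.powersetCard ℓ (Finset.univ : Finset (Fin k))).sup (fun s => ∑ i ∈ s, x i) ≤
      (Finset.powersetCard ℓ (Finset.univ : Finset (Fin k))).sup (fun s => ∑ i ∈ s, y i)) :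
    φ y ≤ φ x := by
  have hφS : ∀ v : Fin k → ℕ, ∑ i, v i = ∑ i, x i →
      φ v = ∏ j, factorialRatio (∑ i, x i) (v j) := by
    intro v hv
    rw [hφ v]
    refine prod_congr rfl fun j _ => ?_
    rw [factorialRatio, ← hv, ← add_sum_erase univ v (mem_univ j), Nat.add_sub_cancel_left]
  rw [hφS y hsum.symm, hφS x rfl]
  exact Majorization.prod_le_prod_of_isMajorizedBy (fun m => (factorialRatio_pos _ m).le)
    (fun _ _ => factorialRatio_mul_le) rfl ⟨hsum, hmaj⟩

/-- **Schur-concavity of φ.** The function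
φ(x₁,…,x_k) = ∏_j (Σ_{ℓ≠j} x_ℓ)!/x_j! on ℤ₊^k is Schur-concave: if x is
majorized by y (equal total sums, and for each ℓ = 1,…,k−1 the sum of the ℓ
largest entries of x is at most that of y), then φ(x) ≥ φ(y). -/
theorem phi_schur_concave
    (k : ℕ) (hk : 2 ≤ k)
    (φ : (Fin k → ℕ) → ℝ)
    (hφ : ∀ x, φ x = ∏ j,
      ((∑ ℓ ∈ Finset.univ.erase j, x ℓ).factorial : ℝ) / ((x j).factorial : ℝ))
    (x y : Fin k → ℕ)
    (hsum : ∑ i, x i = ∑ i, y i)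
    (hmaj : ∀ ℓ, 1 ≤ ℓ → ℓ ≤ k - 1 →
      (Finset.powersetCard ℓ (Finset.univ : Finset (Fin k))).sup (fun s => ∑ i ∈ s, x i) ≤
      (Finset.powersetCard ℓ (Finset.univ : Finset (Fin k))).sup (fun s => ∑ i ∈ s, y i)) :
    φ y ≤ φ x :=
  phi_schur_concave_general k φ hφ x y hsum hmaj
end
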